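/- arXiv:math/9806032 — 4 statements merged into one kernel-verified Lean document; each statement's English description precedes it below -/
import Mathlib

section
/- The map γ : W × W → ℂ defined on basis elements of the Witt algebra by γ(l_n, l_m) = (1/12)(n³ − n) δ_{n+m,0} and extended bilinearly is a Lie algebra two-cocycle: it is antisymmetric and satisfies γ([a,b],c) + γ([b,c],a) + γ([c,a],b) = 0. -/
/-!
Both identities are (multi)linear, so it suffices to check them on basis vectors `l_n`. There
every term vanishes unless the indices sum to zero, and in that case each identity is a
polynomial identity in the integer indices.
-/

/-- The Witt algebra, modelled as `ℤ →₀ ℂ` with basis `l_n = single n 1`, with its bracket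
`[l_n, l_m] = (m - n) l_{n+m}` as a bilinear map. -/
noncomputable def wittBracket : (ℤ →₀ ℂ) →ₗ[ℂ] (ℤ →₀ ℂ) →ₗ[ℂ] (ℤ →₀ ℂ) :=
  Finsupp.lsum ℂ fun n =>
    LinearMap.toSpanSingleton ℂ ((ℤ →₀ ℂ) →ₗ[ℂ] (ℤ →₀ ℂ))
      (Finsupp.lsum ℂ fun m => ((m : ℂ) - (n : ℂ)) • Finsupp.lsingle (n + m))

/-- The Virasoro cocycle `γ(l_n, l_m) = (1/12)(n³ − n) δ_{n+m,0}`, extended bilinearly. -/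
noncomputable def virasoroCocycle : (ℤ →₀ ℂ) →ₗ[ℂ] (ℤ →₀ ℂ) →ₗ[ℂ] ℂ :=
  Finsupp.lsum ℂ fun n =>
    LinearMap.toSpanSingleton ℂ ((ℤ →₀ ℂ) →ₗ[ℂ] ℂ)
      (Finsupp.lsum ℂ fun m =>
        LinearMap.toSpanSingleton ℂ ℂ
          (if n + m = 0 then ((n : ℂ) ^ 3 - (n : ℂ)) / 12 else 0))

namespace LinearMap

variable {ι R V M : Type*} [CommSemiring R] [AddCommMonoid V] [Module R V]
  [AddCommMonoid M] [Module R M]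

theorem cyclic_sum_eq_zero_of_basis (b : Module.Basis ι R V) (β : V →ₗ[R] V →ₗ[R] V)
    (ω : V →ₗ[R] V →ₗ[R] M)
    (h : ∀ i j k, ω (β (b i) (b j)) (b k) + ω (β (b j) (b k)) (b i)
      + ω (β (b k) (b i)) (b j) = 0)
    (x y z : V) : ω (β x y) z + ω (β y z) x + ω (β z x) y = 0 := by
  have h_basis_left : ∀ i j w, ω (β (b i) (b j)) w + ω (β (b j) w) (b i)
      + ω (β w (b i)) (b j) = 0 := fun i j w => by
    have : ω (β (b i) (b j)) + ω.flip (b i) ∘ₗ β (b j) + ω.flip (b j) ∘ₗ β.flip (b i) = 0 :=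
      b.ext fun k => by simpa using h i j k
    simpa using LinearMap.congr_fun this w
  have : β.compr₂ (ω.flip z) + (ω ∘ₗ β.flip z).flip + ω ∘ₗ β z = 0 :=
    ext_basis b b fun i j => by simpa using h_basis_left i j z
  simpa using LinearMap.congr_fun₂ this x y

end LinearMap

open Finsupp

theorem virasoroCocycle_single_single (n m : ℤ) :
    virasoroCocycle (single n 1) (single m 1) =
      if n + m = 0 then ((n : ℂ) ^ 3 - n) / 12 else 0 := by
  simp [virasoroCocycle]

theorem wittBracket_single_single (n m : ℤ) :
    wittBracket (single n 1) (single m 1) = ((m : ℂ) - n) • single (n + m) 1 := by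
  simp [wittBracket]

theorem virasoroCocycle_single_single_antisymm (n m : ℤ) :
    virasoroCocycle (single n 1) (single m 1) = -virasoroCocycle (single m 1) (single n 1) := by
  simp only [virasoroCocycle_single_single]
  by_cases h : n + m = 0
  · obtain rfl : m = -n := by omega
    simp only [add_neg_cancel, neg_add_cancel, if_true]
    push_cast
    ring
  · simp [h, add_comm m n]

theorem virasoroCocycle_cyclic_sum_single (n m k : ℤ) :
    virasoroCocycle (wittBracket (single n 1) (single m 1)) (single k 1)
      + virasoroCocycle (wittBracket (single m 1) (single k 1)) (single n 1)
      + virasoroCocycle (wittBracket (single k 1) (single n 1)) (single m 1) = 0 := by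
  simp only [wittBracket_single_single, map_smul, LinearMap.smul_apply,
    virasoroCocycle_single_single, smul_eq_mul]
  by_cases h : n + m + k = 0
  · obtain rfl : k = -n - m := by omega
    simp only [show n + m + (-n - m) = 0 by ring, show m + (-n - m) + n = 0 by ring,
      show -n - m + n + m = 0 by ring, if_true]
    push_cast
    ring
  · simp [show m + k + n = n + m + k by ring, show k + n + m = n + m + k by ring, h]

/-- The Virasoro cocycle is a Lie algebra two-cocycle on the Witt algebra: it is
antisymmetric and satisfies the cocycle identity. -/
theorem virasoroCocycle_is_two_cocycle :
    (∀ a b : ℤ →₀ ℂ, virasoroCocycle a b = - virasoroCocycle b a) ∧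
    (∀ a b c : ℤ →₀ ℂ,
      virasoroCocycle (wittBracket a b) c + virasoroCocycle (wittBracket b c) a
        + virasoroCocycle (wittBracket c a) b = 0) := by
  refine ⟨fun a b => ?_, LinearMap.cyclic_sum_eq_zero_of_basis Finsupp.basisSingleOne _ _ fun n m k => ?_⟩
  · have : virasoroCocycle = -virasoroCocycle.flip :=
      LinearMap.ext_basis Finsupp.basisSingleOne Finsupp.basisSingleOne fun n m => by
        simpa using virasoroCocycle_single_single_antisymm n m
    simpa using LinearMap.congr_fun₂ this a b
  · simpa using virasoroCocycle_cyclic_sum_single n m k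
end

section
/- The Virasoro cocycle γ(l_n, l_m) = (1/12)(n³ − n) δ_{n+m,0} on the Witt algebra is not a coboundary: there exists no linear map φ : W → ℂ with γ(a,b) = φ([a,b]) for all a, b ∈ W. -/
/-!
Every bracket `[l_n, l_{-n}] = -2n l_0` is a multiple of `l_0`, so a coboundary `φ([a, b])`
takes the value `-2n φ(l_0)` on `(l_n, l_{-n})`, which is linear in `n`. The Virasoro cocycle
takes the values `0` at `n = 1` and `1/2` at `n = 2`, which no linear function of `n` does.
-/

open Finsupp

theorem wittBracket_single_single_neg (n : ℤ) :
    wittBracket (single n 1) (single (-n) 1) = (-2 * n : ℂ) • single 0 1 := by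
  rw [wittBracket_single_single, add_neg_cancel]
  push_cast
  ring_nf

theorem virasoroCocycle_single_single_neg (n : ℤ) :
    virasoroCocycle (single n 1) (single (-n) 1) = ((n : ℂ) ^ 3 - n) / 12 := by
  simp [virasoroCocycle_single_single]

theorem coboundary_single_single_neg (φ : (ℤ →₀ ℂ) →ₗ[ℂ] ℂ) (n : ℤ) :
    φ (wittBracket (single n 1) (single (-n) 1)) =
      n * φ (wittBracket (single 1 1) (single (-1) 1)) := by
  simp only [wittBracket_single_single_neg, map_smul, smul_eq_mul]
  push_cast
  ring

/-- The Virasoro cocycle is not a coboundary: there is no linear functional `φ` on the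
Witt algebra with `γ(a,b) = φ([a,b])` for all `a, b`. -/
theorem virasoroCocycle_not_coboundary :
    ¬ ∃ φ : (ℤ →₀ ℂ) →ₗ[ℂ] ℂ, ∀ a b : ℤ →₀ ℂ,
      virasoroCocycle a b = φ (wittBracket a b) := by
  rintro ⟨φ, hφ⟩
  have key := coboundary_single_single_neg φ 2
  rw [← hφ, ← hφ, virasoroCocycle_single_single_neg, virasoroCocycle_single_single_neg] at key
  norm_num at key
end

section
/- Every two-cocycle on the Witt algebra with values in ℂ is cohomologous to a scalar multiple of the Virasoro cocycle γ(l_n, l_m) = (1/12)(n³ − n) δ_{n+m,0}; that is, H²(W, ℂ) is one-dimensional. -/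
/-!
Write `f n m = γ(l_n, l_m)`. Subtracting the coboundary of `p`, where `p n = f 0 n / n` for
`n ≠ 0` and `p 0 = -f 1 (-1) / 2`, makes `f 0 n = 0` for all `n` and `f 1 (-1) = 0`. The cocycle
identity for `(l_n, l_m, l_0)` then reads `(n + m) f n m = 0`, so `f` lives on the antidiagonal,
and the identity for `(l_n, l_1, l_{-n-1})` gives the recurrence
`(1 - n) g (n + 1) + (n + 2) g n = 0` for the odd function `g n = f n (-n)` with `g 1 = 0`.
Its solutions are the multiples of `n³ - n`.
-/

open Finsupp

section CommRing

variable {K : Type*} [CommRing K]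

structure IsWittCocycle (f : ℤ → ℤ → K) : Prop where
  skew : ∀ n m : ℤ, f n m = -f m n
  cocycle : ∀ n m k : ℤ, ((m : K) - n) * f (n + m) k + ((k : K) - m) * f (m + k) n
    + ((n : K) - k) * f (k + n) m = 0

/-- `(δp)(l_n, l_m) = p [l_n, l_m]`. -/
def wittCoboundary (p : ℤ → K) (n m : ℤ) : K := ((m : K) - n) * p (n + m)

theorem isWittCocycle_wittCoboundary (p : ℤ → K) : IsWittCocycle (wittCoboundary p) where
  skew n m := by simp only [wittCoboundary, add_comm m n]; ring
  cocycle n m k := by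
    simp only [wittCoboundary]
    rw [show m + k + n = n + m + k by ring, show k + n + m = n + m + k by ring]
    push_cast
    ring

namespace IsWittCocycle

variable {f : ℤ → ℤ → K}

theorem sub {g : ℤ → ℤ → K} (hf : IsWittCocycle f) (hg : IsWittCocycle g) :
    IsWittCocycle (f - g) where
  skew n m := by simp only [Pi.sub_apply, hf.skew n m, hg.skew n m]; ring
  cocycle n m k := by
    simp only [Pi.sub_apply]
    linear_combination hf.cocycle n m k - hg.cocycle n m k

theorem antidiagonal_recurrence (hf : IsWittCocycle f) (h1 : f 1 (-1) = 0) (n : ℤ) :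
    ((1 : K) - n) * f (n + 1) (-(n + 1)) + ((n : K) + 2) * f n (-n) = 0 := by
  have H := hf.cocycle n 1 (-(n + 1))
  rw [show (1 : ℤ) + -(n + 1) = -n by ring, show -(n + 1) + n = -1 by ring] at H
  push_cast at H
  linear_combination H + ((n : K) + 2) * hf.skew (-n) n - (2 * (n : K) + 1) * hf.skew (-1) 1
    + (2 * (n : K) + 1) * h1

end IsWittCocycle

end CommRing

noncomputable def virasoroCoeff {K : Type*} [Field K] (n m : ℤ) : K :=
  if n + m = 0 then ((n : K) ^ 3 - n) / 12 else 0

section Field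

variable {K : Type*} [Field K] [CharZero K]

theorem eq_cubic_of_recurrence {g : ℤ → K} (hodd : ∀ n, g (-n) = -g n) (h1 : g 1 = 0)
    (hrec : ∀ n : ℤ, ((1 : K) - n) * g (n + 1) + ((n : K) + 2) * g n = 0) (n : ℤ) :
    g n = g 2 / 6 * ((n : K) ^ 3 - n) := by
  have hnonneg : ∀ n : ℤ, 0 ≤ n → g n = g 2 / 6 * ((n : K) ^ 3 - n) := by
    intro n hn
    obtain rfl | rfl | h2 : n = 0 ∨ n = 1 ∨ 2 ≤ n := by omega
    · have h0 := hodd 0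
      rw [neg_zero] at h0
      simp only [Int.cast_zero]
      linear_combination h0 / 2
    · simp [h1]
    · induction n, h2 using Int.leInduction with
      | base => norm_num
      | succ n hn ih =>
        have hne : (1 : K) - n ≠ 0 := by
          rw [sub_ne_zero]; exact_mod_cast (by omega : (1 : ℤ) ≠ n)
        apply mul_left_cancel₀ hne
        push_cast
        linear_combination hrec n - ((n : K) + 2) * ih (by omega)
  rcases le_total 0 n with hn | hn
  · exact hnonneg n hn
  · rw [← neg_neg n, hodd, hnonneg (-n) (by omega)]
    push_cast
    ring

namespace IsWittCocycle

variable {f : ℤ → ℤ → K}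

theorem eq_zero_of_add_ne_zero (hf : IsWittCocycle f) (h0 : ∀ n, f 0 n = 0) {n m : ℤ}
    (hnm : n + m ≠ 0) : f n m = 0 := by
  have H := hf.cocycle n m 0
  simp only [add_zero, zero_add, Int.cast_zero] at H
  have key : ((n : K) + m) * f n m = 0 := by
    linear_combination H - ((m : K) - n) * hf.skew (n + m) 0 + ((m : K) - n) * h0 (n + m)
      + (m : K) * hf.skew m n
  exact (mul_eq_zero.mp key).resolve_left (by exact_mod_cast hnm)

theorem eq_mul_virasoroCoeff (hf : IsWittCocycle f) (h0 : ∀ n, f 0 n = 0) (h1 : f 1 (-1) = 0)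
    (n m : ℤ) : f n m = 2 * f 2 (-2) * virasoroCoeff n m := by
  by_cases hnm : n + m = 0
  · obtain rfl : m = -n := by omega
    have hodd : ∀ k : ℤ, f (-k) (-(-k)) = -f k (-k) := fun k => by
      rw [neg_neg]; exact hf.skew (-k) k
    rw [eq_cubic_of_recurrence (g := fun k => f k (-k)) hodd h1 (hf.antidiagonal_recurrence h1) n,
      virasoroCoeff, if_pos hnm]
    ring
  · rw [hf.eq_zero_of_add_ne_zero h0 hnm, virasoroCoeff, if_neg hnm, mul_zero]

theorem exists_eq_mul_virasoroCoeff_add_wittCoboundary (hf : IsWittCocycle f) :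
    ∃ (c : K) (p : ℤ → K), ∀ n m, f n m = c * virasoroCoeff n m + wittCoboundary p n m := by
  set p : ℤ → K := fun n => if n = 0 then -f 1 (-1) / 2 else f 0 n / n
  have h0 : ∀ n, (f - wittCoboundary p) 0 n = 0 := by
    intro n
    by_cases hn : n = 0
    · subst hn
      simp only [Pi.sub_apply, wittCoboundary, sub_self, zero_mul, sub_zero]
      linear_combination hf.skew 0 0 / 2
    · have hn' : (n : K) ≠ 0 := by exact_mod_cast hn
      simp only [Pi.sub_apply, wittCoboundary, p, zero_add, if_neg hn, Int.cast_zero, sub_zero]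
      rw [mul_div_cancel₀ _ hn', sub_self]
  have h1 : (f - wittCoboundary p) 1 (-1) = 0 := by
    simp only [Pi.sub_apply, wittCoboundary, p]
    norm_num
    ring
  refine ⟨2 * (f - wittCoboundary p) 2 (-2), p, fun n m => ?_⟩
  rw [← (hf.sub (isWittCocycle_wittCoboundary p)).eq_mul_virasoroCoeff h0 h1 n m]
  exact (sub_add_cancel _ _).symm

end IsWittCocycle

end Field
theorem virasoroCocycle_single_single_s5 (n m : ℤ) :
    virasoroCocycle (single n 1) (single m 1) = virasoroCoeff n m := by
  simp [virasoroCocycle, virasoroCoeff]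

theorem isWittCocycle_of_bilinear (γ : (ℤ →₀ ℂ) →ₗ[ℂ] (ℤ →₀ ℂ) →ₗ[ℂ] ℂ)
    (hskew : ∀ a b, γ a b = -γ b a)
    (hcoc : ∀ a b c, γ (wittBracket a b) c + γ (wittBracket b c) a + γ (wittBracket c a) b = 0) :
    IsWittCocycle fun n m => γ (single n 1) (single m 1) where
  skew n m := hskew _ _
  cocycle n m k := by
    simpa only [wittBracket_single_single, map_smul, LinearMap.smul_apply, smul_eq_mul]
      using hcoc (single n 1) (single m 1) (single k 1)

/-- Every two-cocycle on the Witt algebra with values in `ℂ` is cohomologous to a scalar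
multiple of the Virasoro cocycle: `H²(W, ℂ)` is (at most) one-dimensional, spanned by the
class of the Virasoro cocycle. -/
theorem witt_two_cocycle_cohomologous_to_multiple_of_virasoro
    (γ : (ℤ →₀ ℂ) →ₗ[ℂ] (ℤ →₀ ℂ) →ₗ[ℂ] ℂ)
    (hskew : ∀ a b : ℤ →₀ ℂ, γ a b = - γ b a)
    (hcoc : ∀ a b c : ℤ →₀ ℂ,
      γ (wittBracket a b) c + γ (wittBracket b c) a + γ (wittBracket c a) b = 0) :
    ∃ (r : ℂ) (φ : (ℤ →₀ ℂ) →ₗ[ℂ] ℂ), ∀ a b : ℤ →₀ ℂ,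
      γ a b = r * virasoroCocycle a b + φ (wittBracket a b) := by
  obtain ⟨r, p, hγ⟩ :=
    (isWittCocycle_of_bilinear γ hskew hcoc).exists_eq_mul_virasoroCoeff_add_wittCoboundary
  refine ⟨r, linearCombination ℂ p, ?_⟩
  suffices γ = r • virasoroCocycle + wittBracket.compr₂ (linearCombination ℂ p) by
    intro a b
    rw [this]
    rfl
  ext n m
  simp only [LinearMap.coe_comp, Function.comp_apply, lsingle_apply, LinearMap.add_apply,
    LinearMap.smul_apply, LinearMap.compr₂_apply, hγ, virasoroCocycle_single_single_s5,
    wittBracket_single_single, map_smul, linearCombination_single, smul_eq_mul, one_mul,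
    wittCoboundary]
end

section
/- Let V be an admissible module over the affine Lie algebra ĝ = (g ⊗ ℂ[z,z^{-1}]) ⊕ ℂt (i.e., for each v ∈ V and x ∈ g there is N with x(n)v = 0 for all n > N, and t acts by a scalar c), let {u_i}, {u^i} be dual bases of g, and suppose c + κ ≠ 0 where 2κ is the Casimir eigenvalue on the adjoint representation. Then for each k ∈ ℤ the Sugawara operator S_k := −(1/(2(c+κ))) Σ_{l∈ℤ} Σ_i :u_i(k−l) u^i(l): is a well-defined operator on V (the sum applied to any fixed vector has only finitely many nonzero terms after normal ordering). -/
/-- Let `V` be an admissible module of level `c` over the affine Lie algebra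
`ĝ = (g ⊗ ℂ[z,z⁻¹]) ⊕ ℂt` (operators `ρ x n` for `x(n) = x⊗zⁿ`, with `t` acting by the
scalar `c`): each vector is annihilated by `x(n)` for `n` large. Let `{u_i}, {u^i}` be
dual bases of `g` with respect to an invariant symmetric nondegenerate form `B`, let `2κ`
be the Casimir eigenvalue on the adjoint representation, and assume `c + κ ≠ 0`. Then for
each `k ∈ ℤ` the Sugawara operator
`S_k = −(1/(2(c+κ))) Σ_{l∈ℤ} Σ_i :u_i(k−l) u^i(l):` is well defined on `V`: the normally
ordered sum applied to any fixed vector has only finitely many nonzero terms, and the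
resulting assignment is a linear endomorphism of `V`. -/
theorem affine_sugawara_well_defined
    {g : Type*} [LieRing g] [LieAlgebra ℂ g] [FiniteDimensional ℂ g]
    {V : Type*} [AddCommGroup V] [Module ℂ V]
    (B : g →ₗ[ℂ] g →ₗ[ℂ] ℂ)
    (hsym : ∀ x y : g, B x y = B y x)
    (hinv : ∀ x y z : g, B ⁅x, y⁆ z = B x ⁅y, z⁆)
    (hnondeg : ∀ x : g, (∀ y : g, B x y = 0) → x = 0)
    {ι : Type*} [Fintype ι] [DecidableEq ι] (u u' : ι → g)
    (hdual : ∀ i j : ι, B (u i) (u' j) = if i = j then 1 else 0)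
    (κ c : ℂ)
    (hcas : (∑ i : ι, (LieAlgebra.ad ℂ g (u i)) ∘ₗ (LieAlgebra.ad ℂ g (u' i)))
      = (2 * κ) • (LinearMap.id : Module.End ℂ g))
    (hck : c + κ ≠ 0)
    (ρ : g → ℤ → Module.End ℂ V)
    (hlin : ∀ n : ℤ, IsLinearMap ℂ (fun x : g => ρ x n))
    (haff : ∀ (x y : g) (n m : ℤ),
      ρ x n ∘ₗ ρ y m - ρ y m ∘ₗ ρ x n
        = ρ ⁅x, y⁆ (n + m)
          + ((B x y) * (n : ℂ) * (if n + m = 0 then c else 0)) • LinearMap.id)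
    (hadm : ∀ (v : V) (x : g), ∃ N : ℤ, ∀ n : ℤ, N < n → ρ x n v = 0)
    (k : ℤ) :
    (∀ v : V,
      {l : ℤ | (if k - l ≤ l then ∑ i : ι, ρ (u i) (k - l) (ρ (u' i) l v)
          else ∑ i : ι, ρ (u' i) l (ρ (u i) (k - l) v)) ≠ 0}.Finite) ∧
    ∃ S : Module.End ℂ V, ∀ v : V,
      S v = (-(1 / (2 * (c + κ)))) •
        ∑ᶠ l : ℤ, (if k - l ≤ l then ∑ i : ι, ρ (u i) (k - l) (ρ (u' i) l v)
          else ∑ i : ι, ρ (u' i) l (ρ (u i) (k - l) v)) := by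
  classical
  set T : ℤ → Module.End ℂ V := fun l =>
    if k - l ≤ l then ∑ i : ι, (ρ (u i) (k - l)) ∘ₗ (ρ (u' i) l)
      else ∑ i : ι, (ρ (u' i) l) ∘ₗ (ρ (u i) (k - l)) with hT
  have hTapp : ∀ (l : ℤ) (v : V),
      T l v = (if k - l ≤ l then ∑ i : ι, ρ (u i) (k - l) (ρ (u' i) l v)
        else ∑ i : ι, ρ (u' i) l (ρ (u i) (k - l) v)) := by
    intro l v
    by_cases h : k - l ≤ l
    · simp only [hT, if_pos h, LinearMap.sum_apply, LinearMap.comp_apply]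
    · simp only [hT, if_neg h, LinearMap.sum_apply, LinearMap.comp_apply]
  have hfin : ∀ v : V, (Function.support fun l => T l v).Finite := by
    intro v
    choose N hN using fun i => hadm v (u' i)
    choose M hM using fun i => hadm v (u i)
    have hsub : (Function.support fun l => T l v) ⊆
        (⋃ i : ι, Set.Icc (k - N i) (N i)) ∪ (⋃ i : ι, Set.Icc (k - M i) (M i)) := by
      intro l hl
      rw [Function.mem_support, hTapp] at hl
      by_cases h : k - l ≤ l
      · rw [if_pos h] at hl
        obtain ⟨i, hi⟩ := Finset.exists_ne_zero_of_sum_ne_zero hl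
        have h1 : ρ (u' i) l v ≠ 0 := by
          intro h0; rw [h0] at hi; simp at hi
        have h2 : l ≤ N i := by
          by_contra hc
          exact h1 (hN i l (lt_of_not_ge hc))
        exact Or.inl (Set.mem_iUnion.2 ⟨i, ⟨by omega, h2⟩⟩)
      · rw [if_neg h] at hl
        obtain ⟨i, hi⟩ := Finset.exists_ne_zero_of_sum_ne_zero hl
        have h1 : ρ (u i) (k - l) v ≠ 0 := by
          intro h0; rw [h0] at hi; simp at hi
        have h2 : k - l ≤ M i := by
          by_contra hc
          exact h1 (hM i (k - l) (lt_of_not_ge hc))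
        exact Or.inr (Set.mem_iUnion.2 ⟨i, ⟨by omega, by omega⟩⟩)
    exact Set.Finite.subset (Set.Finite.union
      (Set.finite_iUnion fun i => Set.finite_Icc _ _)
      (Set.finite_iUnion fun i => Set.finite_Icc _ _)) hsub
  constructor
  · intro v
    have := hfin v
    refine this.subset ?_
    intro l hl
    simpa [Function.mem_support, hTapp] using hl
  · have hadd : ∀ v w : V, (∑ᶠ (l : ℤ), T l (v + w))
        = (∑ᶠ (l : ℤ), T l v) + (∑ᶠ (l : ℤ), T l w) := by
      intro v w
      have h1 : (fun l => T l (v + w)) = fun l => T l v + T l w := by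
        funext l; exact map_add (T l) v w
      rw [h1, finsum_add_distrib (hfin v) (hfin w)]
    have hsmul : ∀ (a : ℂ) (v : V), (∑ᶠ (l : ℤ), T l (a • v))
        = a • (∑ᶠ (l : ℤ), T l v) := by
      intro a v
      have h1 : (fun l => T l (a • v)) = fun l => a • T l v := by
        funext l; exact map_smul (T l) a v
      rw [h1]
      exact (smul_finsum' a (hfin v)).symm
    refine ⟨(-(1 / (2 * (c + κ)))) •
      (LinearMap.mk ⟨fun v => ∑ᶠ (l : ℤ), T l v, fun v w => hadd v w⟩
        (fun a v => hsmul a v) : Module.End ℂ V), ?_⟩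
    intro v
    simp only [LinearMap.smul_apply, LinearMap.coe_mk, AddHom.coe_mk]
    congr 1
    exact finsum_congr fun l => hTapp l v
end
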